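/- arXiv:1304.0239 — 7 statements merged into one kernel-verified Lean document; each statement's English description precedes it below -/
import Mathlib

section
/- Let G be a group and ρ: G → ℂ* a homomorphism with ρ ≠ 1 (the trivial character). Then the first group cohomology H¹(G, ℂ_ρ) = Z¹(G, ℂ_ρ)/B¹(G, ℂ_ρ) is isomorphic (as an abelian group) to the group of homomorphisms τ: G' → ℂ from the commutator subgroup G' of G to (ℂ, +) satisfying τ(s a s⁻¹) = ρ(s)·τ(a) for all s ∈ G and a ∈ G'. -/
/-- The group of 1-cocycles of `G` with values in `ℂ_ρ`. -/
noncomputable def Z1 {G : Type*} [Group G] (ρ : G →* ℂˣ) : AddSubgroup (G → ℂ) where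
  carrier := {τ : G → ℂ | ∀ a b : G, τ (a * b) = (ρ a : ℂ) * τ b + τ a}
  zero_mem' := by intro a b; simp
  add_mem' := by
    intro τ σ hτ hσ a b
    simp only [Pi.add_apply, hτ a b, hσ a b]; ring
  neg_mem' := by
    intro τ hτ a b
    simp only [Pi.neg_apply, hτ a b]; ring

/-- The group of 1-coboundaries of `G` with values in `ℂ_ρ`. -/
noncomputable def B1 {G : Type*} [Group G] (ρ : G →* ℂˣ) : AddSubgroup (G → ℂ) where
  carrier := {τ : G → ℂ | ∃ c : ℂ, ∀ a : G, τ a = (ρ a : ℂ) * c - c}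
  zero_mem' := ⟨0, by simp⟩
  add_mem' := by
    rintro τ σ ⟨c, hc⟩ ⟨d, hd⟩
    exact ⟨c + d, fun a => by simp only [Pi.add_apply, hc a, hd a]; ring⟩
  neg_mem' := by
    rintro τ ⟨c, hc⟩
    exact ⟨-c, fun a => by simp only [Pi.neg_apply, hc a]; ring⟩

/-- The first group cohomology `H¹(G, ℂ_ρ) = Z¹(G, ℂ_ρ)/B¹(G, ℂ_ρ)`. -/
noncomputable def H1 {G : Type*} [Group G] (ρ : G →* ℂˣ) :=
  Z1 ρ ⧸ (B1 ρ).addSubgroupOf (Z1 ρ)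

noncomputable instance {G : Type*} [Group G] (ρ : G →* ℂˣ) : AddCommGroup (H1 ρ) := by
  unfold H1; infer_instance

/-- The group of additive homomorphisms `τ : G' → ℂ` from the commutator subgroup of `G`
satisfying `τ(s a s⁻¹) = ρ(s) τ(a)` for all `s ∈ G`, `a ∈ G'`. -/
noncomputable def EquivariantHoms {G : Type*} [Group G] (ρ : G →* ℂˣ) :
    AddSubgroup ((commutator G) → ℂ) where
  carrier := {τ | (∀ a b : commutator G, τ (a * b) = τ a + τ b) ∧
    ∀ (s : G) (a : commutator G),
      τ ⟨s * (a : G) * s⁻¹, Subgroup.Normal.conj_mem inferInstance (a : G) a.2 s⟩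
        = (ρ s : ℂ) * τ a}
  zero_mem' := ⟨by simp, by simp⟩
  add_mem' := by
    rintro τ σ ⟨hτ1, hτ2⟩ ⟨hσ1, hσ2⟩
    refine ⟨fun a b => ?_, fun s a => ?_⟩
    · simp only [Pi.add_apply, hτ1 a b, hσ1 a b]; ring
    · simp only [Pi.add_apply, hτ2 s a, hσ2 s a]; ring
  neg_mem' := by
    rintro τ ⟨hτ1, hτ2⟩
    refine ⟨fun a b => ?_, fun s a => ?_⟩
    · simp only [Pi.neg_apply, hτ1 a b]; ring
    · simp only [Pi.neg_apply, hτ2 s a]; ring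

open scoped commutatorElement

/-- If `ρ : G → ℂ*` is a nontrivial character, then
`H¹(G, ℂ_ρ)` is isomorphic, as an abelian group, to the group of homomorphisms
`τ : G' → (ℂ, +)` from the commutator subgroup of `G` satisfying
`τ(s a s⁻¹) = ρ(s)·τ(a)` for all `s ∈ G`, `a ∈ G'`. -/
theorem h1_iso_equivariant_homs {G : Type*} [Group G] (ρ : G →* ℂˣ) (hρ : ρ ≠ 1) :
    Nonempty (H1 ρ ≃+ EquivariantHoms ρ) := by
  classical
  obtain ⟨s₀, hs₀⟩ : ∃ s : G, ρ s ≠ 1 := by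
    by_contra h
    push_neg at h
    exact hρ (by ext s; simp [h s])
  set q : ℂ := (ρ s₀ : ℂ) with hqdef
  have hq : q ≠ 1 := fun h => hs₀ (Units.ext h)
  have hq' : (1 : ℂ) - q ≠ 0 := sub_ne_zero.mpr (Ne.symm hq)
  have hcomm : ∀ a : G, a ∈ commutator G → (ρ a : ℂ) = 1 := by
    intro a ha
    have := Abelianization.commutator_subset_ker ρ ha
    rw [MonoidHom.mem_ker] at this
    rw [this]; rfl
  have hmem : ∀ a : G, ⁅a, s₀⁆ ∈ commutator G := fun a =>
    Subgroup.commutator_mem_commutator (Subgroup.mem_top a) (Subgroup.mem_top s₀)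
  have h1 : ∀ τ : Z1 ρ, (τ : G → ℂ) 1 = 0 := by
    intro τ
    have h := τ.2 1 1
    simp only [mul_one, map_one, Units.val_one, one_mul] at h
    linear_combination -h
  have hinv : ∀ (τ : Z1 ρ) (a : G), (ρ a : ℂ) * (τ : G → ℂ) a⁻¹ + (τ : G → ℂ) a = 0 := by
    intro τ a
    have h := τ.2 a a⁻¹
    rw [mul_inv_cancel, h1 τ] at h
    linear_combination -h
  have hres : ∀ τ : Z1 ρ, (fun a : commutator G => (τ : G → ℂ) a) ∈ EquivariantHoms ρ := by
    intro τ
    constructor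
    · intro a b
      show (τ : G → ℂ) ((a : G) * (b : G)) = (τ : G → ℂ) (a : G) + (τ : G → ℂ) (b : G)
      have h := τ.2 (a : G) (b : G)
      rw [hcomm (a : G) a.2, one_mul] at h
      rw [h]; ring
    · intro s a
      show (τ : G → ℂ) (s * (a : G) * s⁻¹) = (ρ s : ℂ) * (τ : G → ℂ) (a : G)
      have e1 : (τ : G → ℂ) (s * (a : G) * s⁻¹) =
          (ρ s : ℂ) * (τ : G → ℂ) ((a : G) * s⁻¹) + (τ : G → ℂ) s := by
        have h := τ.2 s ((a : G) * s⁻¹); rw [← mul_assoc] at h; exact h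
      have e2 : (τ : G → ℂ) ((a : G) * s⁻¹) =
          (ρ (a : G) : ℂ) * (τ : G → ℂ) s⁻¹ + (τ : G → ℂ) (a : G) := τ.2 (a : G) s⁻¹
      have e3 := hinv τ s
      rw [e1, e2, hcomm (a : G) a.2, one_mul]
      linear_combination e3
  let f : Z1 ρ →+ EquivariantHoms ρ :=
    { toFun := fun τ => ⟨fun a => (τ : G → ℂ) a, hres τ⟩
      map_zero' := rfl
      map_add' := fun τ σ => rfl }
  have hker : f.ker = (B1 ρ).addSubgroupOf (Z1 ρ) := by
    ext τ
    constructor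
    · intro hτ
      rw [AddMonoidHom.mem_ker] at hτ
      have hτ0 : ∀ a : G, a ∈ commutator G → (τ : G → ℂ) a = 0 := by
        intro a ha
        exact congrFun (congrArg Subtype.val hτ) ⟨a, ha⟩
      have hq1 : q - 1 ≠ 0 := sub_ne_zero.mpr hq
      refine ⟨(τ : G → ℂ) s₀ / (q - 1), fun a => ?_⟩
      have h0 : (τ : G → ℂ) ⁅a, s₀⁆ = 0 := hτ0 _ (hmem a)
      have e1 := τ.2 a (s₀ * (a⁻¹ * s₀⁻¹))
      have e2 := τ.2 s₀ (a⁻¹ * s₀⁻¹)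
      have e3 := τ.2 a⁻¹ s₀⁻¹
      have e4 := hinv τ a
      have e5 := hinv τ s₀
      have hprod : a * (s₀ * (a⁻¹ * s₀⁻¹)) = ⁅a, s₀⁆ := by
        rw [commutatorElement_def]; group
      rw [hprod, h0, e2, e3] at e1
      have hmi : (ρ a : ℂ) * (ρ a⁻¹ : ℂ) = 1 := by
        rw [← Units.val_mul, ← map_mul, mul_inv_cancel, map_one, Units.val_one]
      have key : (1 - q) * (τ : G → ℂ) a = (1 - (ρ a : ℂ)) * (τ : G → ℂ) s₀ := by
        linear_combination (-1 : ℂ) * e1 - q * e4 - e5 - q * (τ : G → ℂ) s₀⁻¹ * hmi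
      field_simp
      simp only [AddSubgroup.coe_subtype]; linear_combination -key
    · rintro ⟨c, hc⟩
      rw [AddMonoidHom.mem_ker]
      ext a
      show (τ : G → ℂ) (a : G) = 0
      have h := hc (a : G)
      rw [hcomm (a : G) a.2, one_mul, sub_self] at h
      exact h
  have hsurj : Function.Surjective f := by
    rintro ⟨σ, hadd, hequiv⟩
    have hσ1 : σ 1 = 0 := by
      have h := hadd 1 1
      simp only [mul_one] at h
      linear_combination -h
    have hσinv : ∀ a : commutator G, σ a⁻¹ = -σ a := by
      intro a
      have h := hadd a a⁻¹
      rw [mul_inv_cancel, hσ1] at h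
      linear_combination -h
    set τ : G → ℂ := fun a => σ ⟨⁅a, s₀⁆, hmem a⟩ / (1 - q) with hτdef
    have hτZ : τ ∈ Z1 ρ := by
      intro a b
      have hsplit : (⟨⁅a * b, s₀⁆, hmem (a * b)⟩ : commutator G) =
          ⟨a * ⁅b, s₀⁆ * a⁻¹, Subgroup.Normal.conj_mem inferInstance _ (hmem b) a⟩ *
          ⟨⁅a, s₀⁆, hmem a⟩ := by
        ext
        show ⁅a * b, s₀⁆ = a * ⁅b, s₀⁆ * a⁻¹ * ⁅a, s₀⁆
        simp only [commutatorElement_def]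
        group
      have hσab : σ ⟨⁅a * b, s₀⁆, hmem (a * b)⟩ =
          (ρ a : ℂ) * σ ⟨⁅b, s₀⁆, hmem b⟩ + σ ⟨⁅a, s₀⁆, hmem a⟩ := by
        rw [hsplit, hadd, hequiv a ⟨⁅b, s₀⁆, hmem b⟩]
      show τ (a * b) = (ρ a : ℂ) * τ b + τ a
      rw [hτdef]
      simp only
      rw [hσab]
      field_simp
      try ring
    refine ⟨⟨τ, hτZ⟩, ?_⟩
    ext a
    show τ (a : G) = σ a
    have hsplit : (⟨⁅(a : G), s₀⁆, hmem a⟩ : commutator G) =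
        a * ⟨s₀ * ((a⁻¹ : commutator G) : G) * s₀⁻¹,
          Subgroup.Normal.conj_mem inferInstance _ (a⁻¹ : commutator G).2 s₀⟩ := by
      ext
      show ⁅(a : G), s₀⁆ = (a : G) * (s₀ * (a : G)⁻¹ * s₀⁻¹)
      rw [commutatorElement_def]; group
    have hval : σ ⟨⁅(a : G), s₀⁆, hmem a⟩ = (1 - q) * σ a := by
      rw [hsplit, hadd, hequiv s₀ a⁻¹, hσinv]
      ring
    rw [hτdef]
    simp only
    rw [hval]
    field_simp
  exact ⟨(QuotientAddGroup.quotientAddEquivOfEq hker.symm).trans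
    (QuotientAddGroup.quotientKerEquivOfSurjective f hsurj)⟩
end

section
/- Let G be a group, K its torsion free metabelian kernel, and π: G → TFM(G) = G/K the quotient map. For any nontrivial homomorphism ρ: G → ℂ* (which necessarily factors through TFM(G) as ρ̄), the induced map on first cohomology H¹(TFM(G), ℂ_ρ̄) → H¹(G, ℂ_ρ) is an isomorphism. -/
/-- Pullback of cocycles along a surjection `φ : G →* Q`: a cocycle for `ρ̄ : Q → ℂ*`
pulls back to a cocycle for `ρ̄ ∘ φ`. -/
noncomputable def pullbackZ1 {G Q : Type*} [Group G] [Group Q] (φ : G →* Q)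
    (ρbar : Q →* ℂˣ) : Z1 ρbar →+ Z1 (ρbar.comp φ) where
  toFun τ := ⟨(τ : Q → ℂ) ∘ φ, fun a b => by
    simpa using τ.2 (φ a) (φ b)⟩
  map_zero' := rfl
  map_add' _ _ := rfl

lemma pullbackZ1_maps_B1 {G Q : Type*} [Group G] [Group Q] (φ : G →* Q)
    (ρbar : Q →* ℂˣ) :
    (B1 ρbar).addSubgroupOf (Z1 ρbar) ≤
      ((B1 (ρbar.comp φ)).addSubgroupOf (Z1 (ρbar.comp φ))).comap (pullbackZ1 φ ρbar) := by
  rintro ⟨τ, hτ⟩ ⟨c, hc⟩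
  exact ⟨c, fun a => hc (φ a)⟩

/-- The induced map `H¹(Q, ℂ_ρ̄) → H¹(G, ℂ_{ρ̄ ∘ φ})` on first cohomology. -/
noncomputable def inducedH1 {G Q : Type*} [Group G] [Group Q] (φ : G →* Q)
    (ρbar : Q →* ℂˣ) : H1 ρbar →+ H1 (ρbar.comp φ) :=
  QuotientAddGroup.map _ _ (pullbackZ1 φ ρbar) (pullbackZ1_maps_B1 φ ρbar)

lemma Z1_apply_one {G : Type*} [Group G] (ρ : G →* ℂˣ) {τ : G → ℂ}
    (hτ : ∀ a b : G, τ (a * b) = (ρ a : ℂ) * τ b + τ a) : τ 1 = 0 := by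
  have := hτ 1 1
  simpa using this

lemma Z1_vanish {G : Type*} [Group G] (K : Subgroup G) [K.Normal]
    (hK : (K : Set G) = {g : G | ∃ h : g ∈ commutator G,
      IsOfFinOrder (Abelianization.of (⟨g, h⟩ : commutator G))})
    (ρ : G →* ℂˣ) (hcomm : commutator G ≤ ρ.ker)
    {τ : G → ℂ} (hτ : ∀ a b : G, τ (a * b) = (ρ a : ℂ) * τ b + τ a)
    {g : G} (hg : g ∈ K) : τ g = 0 := by
  have hg' : g ∈ (K : Set G) := hg
  rw [hK] at hg'
  obtain ⟨h, hfin⟩ := hg'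
  -- τ restricted to the commutator subgroup is additive
  set φ : ↥(commutator G) →* Multiplicative ℂ :=
    { toFun := fun x => Multiplicative.ofAdd (τ x)
      map_one' := by
        simp only [Subgroup.coe_one]
        rw [Z1_apply_one ρ hτ]; rfl
      map_mul' := by
        intro a b
        have ha : ρ (a : G) = 1 := hcomm a.2
        have := hτ (a : G) (b : G)
        rw [ha] at this
        simp only [Subgroup.coe_mul]
        rw [this]
        simp only [Units.val_one, one_mul]
        rw [add_comm]
        rfl } with hφ
  obtain ⟨n, hn, hpow⟩ := hfin.exists_pow_eq_one
  set x : ↥(commutator G) := ⟨g, h⟩ with hx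
  have hxn : x ^ n ∈ commutator ↥(commutator G) := by
    have : Abelianization.of (x ^ n) = 1 := by
      rw [map_pow]; exact hpow
    exact (QuotientGroup.eq_one_iff _).mp this
  have hφx : φ (x ^ n) = 1 := Abelianization.commutator_subset_ker φ hxn
  rw [map_pow] at hφx
  have : n • (τ (x : G)) = 0 := by
    have := congrArg Multiplicative.toAdd hφx
    simpa [φ, ← ofAdd_nsmul] using this
  have hτx : τ (x : G) = 0 := by
    have hn' : (n : ℂ) ≠ 0 := Nat.cast_ne_zero.mpr hn.ne'
    have : (n : ℂ) * τ (x : G) = 0 := by simpa [nsmul_eq_mul] using this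
    exact (mul_eq_zero.mp this).resolve_left hn'
  simpa using hτx

/-- let `K` be the torsion free metabelian kernel of `G` and
`π : G → TFM(G) = G/K` the quotient map. For any nontrivial character `ρ̄ : TFM(G) → ℂ*`
(every nontrivial `ρ : G → ℂ*` factors through `TFM(G)` as such a `ρ̄`), the induced map
`H¹(TFM(G), ℂ_ρ̄) → H¹(G, ℂ_ρ)` is an isomorphism (i.e. bijective). -/
theorem inducedH1_bijective (G : Type*) [Group G] (K : Subgroup G) [K.Normal]
    (hK : (K : Set G) = {g : G | ∃ h : g ∈ commutator G,
      IsOfFinOrder (Abelianization.of (⟨g, h⟩ : commutator G))})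
    (ρbar : G ⧸ K →* ℂˣ) (hρ : ρbar.comp (QuotientGroup.mk' K) ≠ 1) :
    Function.Bijective (inducedH1 (QuotientGroup.mk' K) ρbar) := by
  set π := QuotientGroup.mk' K with hπ
  set ρ := ρbar.comp π with hρdef
  have hcomm : commutator G ≤ ρ.ker := Abelianization.commutator_subset_ker ρ
  have hsurj : Function.Surjective π := QuotientGroup.mk'_surjective K
  have hvanish : ∀ (σ : Z1 ρ), ∀ g ∈ K, (σ : G → ℂ) g = 0 := fun σ g hg =>
    Z1_vanish K hK ρ hcomm σ.2 hg
  constructor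
  · rw [injective_iff_map_eq_zero]
    intro z hz
    induction z using QuotientAddGroup.induction_on with
    | H τ =>
      have hz' : ((pullbackZ1 π ρbar τ : Z1 (ρbar.comp π)) :
          Z1 (ρbar.comp π) ⧸ (B1 (ρbar.comp π)).addSubgroupOf (Z1 (ρbar.comp π))) = 0 := hz
      change (τ : Z1 ρbar ⧸ (B1 ρbar).addSubgroupOf (Z1 ρbar)) = 0
      rw [QuotientAddGroup.eq_zero_iff] at hz' ⊢
      rw [AddSubgroup.mem_addSubgroupOf] at hz' ⊢
      obtain ⟨c, hc⟩ := hz'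
      refine ⟨c, fun q => ?_⟩
      obtain ⟨a, rfl⟩ := hsurj q
      exact hc a
  · intro y
    induction y using QuotientAddGroup.induction_on with
    | H σ =>
      have hconst : ∀ a b : G, π a = π b → (σ : G → ℂ) a = (σ : G → ℂ) b := by
        intro a b hab
        rw [QuotientGroup.mk'_eq_mk'] at hab
        obtain ⟨z, hz, rfl⟩ := hab
        rw [σ.2 a z, hvanish σ z hz]
        ring
      set τbar : (G ⧸ K) → ℂ := fun q => (σ : G → ℂ) q.out with hτbar
      have hfac : ∀ a : G, τbar (π a) = (σ : G → ℂ) a := by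
        intro a
        refine hconst _ a ?_
        show π (π a).out = π a
        exact QuotientGroup.out_eq' (π a)
      have hcoc : ∀ q r : G ⧸ K, τbar (q * r) = (ρbar q : ℂ) * τbar r + τbar q := by
        intro q r
        obtain ⟨a, rfl⟩ := hsurj q
        obtain ⟨b, rfl⟩ := hsurj r
        have : π a * π b = π (a * b) := (map_mul π a b).symm
        rw [this, hfac, hfac, hfac, σ.2 a b]
        rfl
      refine ⟨QuotientAddGroup.mk (⟨τbar, hcoc⟩ : Z1 ρbar), ?_⟩
      have hEq : pullbackZ1 π ρbar ⟨τbar, hcoc⟩ = σ := Subtype.ext (funext fun a => hfac a)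
      calc inducedH1 π ρbar (QuotientAddGroup.mk ⟨τbar, hcoc⟩)
          = (show H1 (ρbar.comp π) from QuotientAddGroup.mk (pullbackZ1 π ρbar ⟨τbar, hcoc⟩)) := rfl
        _ = (show H1 (ρbar.comp π) from QuotientAddGroup.mk σ) := by rw [hEq]
end

section
/- Let A be an abelian group and ρ: G → ℂ* a nontrivial homomorphism from a group G whose commutator subgroup G' is abelian (i.e., G is metabelian). Then H¹(G, ℂ_ρ) is isomorphic to the ℂ-vector space of homomorphisms τ: G' → ℂ satisfying τ(s a s⁻¹) = ρ(s) τ(a) for all s ∈ G, a ∈ G', i.e., to Hom_{ℂ[Ab(G)]}(G' ⊗_ℤ ℂ, ℂ_ρ), where Ab(G) acts on G' by conjugation. -/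
attribute [local instance] commutatorElement

/-- let `G` be a metabelian group (its commutator subgroup `G'` is abelian)
and `ρ : G → ℂ*` a nontrivial character. Then `H¹(G, ℂ_ρ)` is isomorphic to the group of
homomorphisms `τ : G' → (ℂ, +)` satisfying `τ(s a s⁻¹) = ρ(s) τ(a)` for all `s ∈ G`,
`a ∈ G'` (i.e. to `Hom_{ℂ[Ab(G)]}(G' ⊗ ℂ, ℂ_ρ)`, with `Ab(G)` acting by conjugation). -/
theorem h1_iso_equivariant_homs_metabelian {G : Type*} [Group G]
    (hmeta : ∀ x y : commutator G, x * y = y * x)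
    (ρ : G →* ℂˣ) (hρ : ρ ≠ 1) :
    Nonempty (H1 ρ ≃+ EquivariantHoms ρ) := by
  classical
  obtain ⟨s₀, hs₀⟩ : ∃ s, (ρ s : ℂ) ≠ 1 := by
    by_contra h; push_neg at h
    exact hρ (MonoidHom.ext fun s => Units.ext (by simpa using h s))
  have hlam : (ρ s₀ : ℂ) - 1 ≠ 0 := sub_ne_zero.mpr hs₀
  have hcomm : ∀ a : G, a ∈ commutator G → (ρ a : ℂ) = 1 := by
    intro a ha
    have := Abelianization.commutator_subset_ker ρ ha
    rw [MonoidHom.mem_ker] at this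
    rw [this]; simp
  -- basic facts about cocycles
  have hZ1 : ∀ τ : G → ℂ, τ ∈ Z1 ρ → τ 1 = 0 := by
    intro τ hτ
    have h := hτ 1 1
    simp only [mul_one, map_one, Units.val_one, one_mul] at h
    linear_combination -h
  have hZinv : ∀ τ : G → ℂ, τ ∈ Z1 ρ → ∀ s : G, (ρ s : ℂ) * τ s⁻¹ = -τ s := by
    intro τ hτ s
    have h := hτ s s⁻¹
    rw [mul_inv_cancel, hZ1 τ hτ] at h
    linear_combination -h
  -- the restriction map
  have hres : ∀ τ : Z1 ρ, (fun a : commutator G => τ.1 (a : G)) ∈ EquivariantHoms ρ := by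
    rintro ⟨τ, hτ⟩
    refine ⟨fun a b => ?_, fun s a => ?_⟩
    · have h := hτ (a : G) (b : G)
      rw [hcomm (a : G) a.2] at h
      show τ ((a : G) * (b : G)) = τ (a : G) + τ (b : G)
      rw [h]; ring
    · have h2 := hτ (s * (a : G)) s⁻¹
      have h3 := hτ s (a : G)
      simp only [map_mul, Units.val_mul, hcomm (a : G) a.2, mul_one] at h2
      rw [h3] at h2
      have h4 := hZinv τ hτ s
      show τ (s * (a : G) * s⁻¹) = (ρ s : ℂ) * τ (a : G)
      rw [h2]; linear_combination h4
  set φ : Z1 ρ →+ EquivariantHoms ρ :=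
    { toFun := fun τ => ⟨fun a => τ.1 (a : G), hres τ⟩
      map_zero' := rfl
      map_add' := fun _ _ => rfl } with hφ
  have hker : (B1 ρ).addSubgroupOf (Z1 ρ) = φ.ker := by
    ext ⟨τ, hτ⟩
    simp only [AddSubgroup.mem_addSubgroupOf, AddMonoidHom.mem_ker, hφ]
    constructor
    · rintro ⟨c, hc⟩
      refine Subtype.ext (funext fun a => ?_)
      show τ (a : G) = 0
      rw [hc (a : G), hcomm (a : G) a.2]; ring
    · intro h0
      have h0' : ∀ a : G, a ∈ commutator G → τ a = 0 := by
        intro a ha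
        have := congrFun (congrArg Subtype.val h0) ⟨a, ha⟩
        simpa using this
      refine ⟨τ s₀ / ((ρ s₀ : ℂ) - 1), fun a => ?_⟩
      -- τ (a * s₀) = τ (s₀ * a)
      have hmem : ⁅a, s₀⁆ ∈ commutator G :=
        Subgroup.commutator_mem_commutator (Subgroup.mem_top a) (Subgroup.mem_top s₀)
      have hswap : τ (a * s₀) = τ (s₀ * a) := by
        have key : a * s₀ = ⁅a, s₀⁆ * (s₀ * a) := by group
        rw [key, hτ ⁅a, s₀⁆ (s₀ * a), hcomm _ hmem, h0' _ hmem]; ring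
      have hab := hτ a s₀
      have hba := hτ s₀ a
      have hmain : (ρ a : ℂ) * τ s₀ + τ a = (ρ s₀ : ℂ) * τ a + τ s₀ := by
        rw [← hab, ← hba, hswap]
      field_simp
      linear_combination (-1 : ℂ) * hmain
  have hsurj : Function.Surjective φ := by
    rintro ⟨σ, hσ1, hσ2⟩
    have hσ0 : σ 1 = 0 := by
      have h := hσ1 1 1
      rw [mul_one] at h
      linear_combination -h
    have hσinv : ∀ a : commutator G, σ a⁻¹ = -σ a := by
      intro a
      have h := hσ1 a a⁻¹
      rw [mul_inv_cancel, hσ0] at h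
      linear_combination -h
    have hmem : ∀ g : G, ⁅s₀, g⁆ ∈ commutator G := fun g =>
      Subgroup.commutator_mem_commutator (Subgroup.mem_top s₀) (Subgroup.mem_top g)
    set τ : G → ℂ := fun g => σ ⟨⁅s₀, g⁆, hmem g⟩ / ((ρ s₀ : ℂ) - 1) with hτdef
    have hτZ : τ ∈ Z1 ρ := by
      intro a b
      have hconjmem : a * (⁅s₀, b⁆ : G) * a⁻¹ ∈ commutator G :=
        Subgroup.Normal.conj_mem inferInstance _ (hmem b) a
      have e1 : (⟨⁅s₀, a * b⁆, hmem (a * b)⟩ : commutator G)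
          = ⟨⁅s₀, a⁆, hmem a⟩ * ⟨a * (⁅s₀, b⁆ : G) * a⁻¹, hconjmem⟩ :=
        Subtype.ext (by push_cast; group)
      have e2 : σ (⟨⁅s₀, a⁆, hmem a⟩ * ⟨a * (⁅s₀, b⁆ : G) * a⁻¹, hconjmem⟩)
          = σ ⟨⁅s₀, a⁆, hmem a⟩ + σ ⟨a * (⁅s₀, b⁆ : G) * a⁻¹, hconjmem⟩ := hσ1 _ _
      have e3 : σ (⟨a * (⁅s₀, b⁆ : G) * a⁻¹, hconjmem⟩ : commutator G)
          = (ρ a : ℂ) * σ ⟨⁅s₀, b⁆, hmem b⟩ := hσ2 a ⟨⁅s₀, b⁆, hmem b⟩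
      show σ ⟨⁅s₀, a * b⁆, hmem (a * b)⟩ / ((ρ s₀ : ℂ) - 1)
          = (ρ a : ℂ) * (σ ⟨⁅s₀, b⁆, hmem b⟩ / ((ρ s₀ : ℂ) - 1))
            + σ ⟨⁅s₀, a⁆, hmem a⟩ / ((ρ s₀ : ℂ) - 1)
      rw [e1, e2, e3]; field_simp; ring
    refine ⟨⟨τ, hτZ⟩, Subtype.ext (funext fun a => ?_)⟩
    show τ (a : G) = σ a
    have hconjmem : s₀ * (a : G) * s₀⁻¹ ∈ commutator G :=
      Subgroup.Normal.conj_mem inferInstance _ a.2 s₀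
    have e1 : (⟨⁅s₀, (a : G)⁆, hmem (a : G)⟩ : commutator G)
        = ⟨s₀ * (a : G) * s₀⁻¹, hconjmem⟩ * a⁻¹ := by
      refine Subtype.ext ?_
      push_cast
      group
    have e2 : σ (⟨s₀ * (a : G) * s₀⁻¹, hconjmem⟩ * a⁻¹)
        = σ ⟨s₀ * (a : G) * s₀⁻¹, hconjmem⟩ + σ a⁻¹ := hσ1 _ _
    have e3 : σ (⟨s₀ * (a : G) * s₀⁻¹, hconjmem⟩ : commutator G) = (ρ s₀ : ℂ) * σ a :=
      hσ2 s₀ a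
    show σ ⟨⁅s₀, (a : G)⁆, hmem (a : G)⟩ / ((ρ s₀ : ℂ) - 1) = σ a
    rw [e1, e2, e3, hσinv a]
    field_simp; ring
  exact ⟨(QuotientAddGroup.quotientAddEquivOfEq hker).trans
    (QuotientAddGroup.quotientKerEquivOfSurjective φ hsurj)⟩
end

section
/- Let R = ℤ[x₁, x₁⁻¹, …, x_n, x_n⁻¹] be the Laurent polynomial ring in n variables, and let M be the R-module with generators γ_{ab} for 1 ≤ a, b ≤ n, subject to the relations γ_{ab} + γ_{ba} = 0 for all a, b, and (x_a − 1)γ_{bc} + (x_b − 1)γ_{ca} + (x_c − 1)γ_{ab} = 0 for all 1 ≤ a, b, c ≤ n. Then M ⊗_R Frac(R) has dimension n − 1 over the fraction field Frac(R); i.e., M has rank n − 1 as an R-module. -/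
set_option maxHeartbeats 1000000
set_option synthInstance.maxHeartbeats 400000


/-- The Laurent polynomial ring `ℤ[x₁^{±1}, …, x_n^{±1}]`, realized as the group algebra
`ℤ[ℤⁿ]`. -/
abbrev LaurentRing (n : ℕ) := AddMonoidAlgebra ℤ (Fin n →₀ ℤ)

noncomputable instance (n : ℕ) : IsDomain (LaurentRing n) :=
  NoZeroDivisors.to_isDomain _

/-- The coordinate `x_a` in `ℤ[x₁^{±1}, …, x_n^{±1}]`. -/
noncomputable def X {n : ℕ} (a : Fin n) : LaurentRing n :=
  AddMonoidAlgebra.single (Finsupp.single a 1) 1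

/-- The relations among the generators `γ_{ab}`: `γ_{ab} + γ_{ba} = 0` and
`(x_a − 1)γ_{bc} + (x_b − 1)γ_{ca} + (x_c − 1)γ_{ab} = 0`. -/
noncomputable def gamma {n : ℕ} (a b : Fin n) : Fin n × Fin n → LaurentRing n :=
  Pi.single (a, b) 1

noncomputable def AlexRelations (n : ℕ) : Set (Fin n × Fin n → LaurentRing n) :=
  {v | ∃ a b : Fin n, v = gamma a b + gamma b a} ∪
  {v | ∃ a b c : Fin n, v = (X a - 1) • gamma b c
    + (X b - 1) • gamma c a
    + (X c - 1) • gamma a b}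

/-- The module `M` on generators `γ_{ab}`, `1 ≤ a, b ≤ n`, with the above relations
(the first Alexander module of the free group of rank `n`). -/
noncomputable def AlexModule (n : ℕ) :=
  (Fin n × Fin n → LaurentRing n) ⧸ Submodule.span (LaurentRing n) (AlexRelations n)

noncomputable instance (n : ℕ) : AddCommGroup (AlexModule n) := by
  unfold AlexModule; infer_instance

noncomputable instance (n : ℕ) : Module (LaurentRing n) (AlexModule n) := by
  unfold AlexModule; infer_instance

noncomputable section AlexProof

open LocalizedModule

/-- The fraction field of the Laurent ring. -/
abbrev Kn (n : ℕ) := FractionRing (LaurentRing n)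

variable {n : ℕ}

lemma X_sub_one_ne_zero (a : Fin n) : X a - 1 ≠ 0 := by
  intro h
  have h1 : X a = 1 := sub_eq_zero.mp h
  have h2 : (Finsupp.single (Finsupp.single a (1 : ℤ)) (1 : ℤ) : (Fin n →₀ ℤ) →₀ ℤ)
      = Finsupp.single 0 1 := by
    rw [AddMonoidAlgebra.one_def] at h1
    exact congrArg AddMonoidAlgebra.coeff h1
  rcases (Finsupp.single_eq_single_iff _ _ _ _).mp h2 with ⟨ha, -⟩ | ⟨hb, -⟩
  · exact one_ne_zero (Finsupp.single_eq_zero.mp ha)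
  · exact one_ne_zero hb

lemma two_ne_zero_laurent : (2 : LaurentRing n) ≠ 0 := by
  have h : (2 : LaurentRing n) = AddMonoidAlgebra.single 0 2 := by
    rw [show (2 : LaurentRing n) = 1 + 1 from (one_add_one_eq_two).symm,
      AddMonoidAlgebra.one_def, ← AddMonoidAlgebra.single_add]
    norm_num
  rw [h]
  intro hz
  exact (by norm_num : (2 : ℤ) ≠ 0) (AddMonoidAlgebra.single_eq_zero.mp hz)

/-- The class of `γ_{ab}` in `AlexModule n`. -/
abbrev qq (a b : Fin n) : AlexModule n := Submodule.Quotient.mk (gamma a b)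

lemma qq_skew (a b : Fin n) : qq a b + qq b a = 0 := by
  have h : (Submodule.Quotient.mk (gamma a b + gamma b a) : AlexModule n) = 0 :=
    (Submodule.Quotient.mk_eq_zero _).mpr
      (Submodule.subset_span (Or.inl ⟨a, b, rfl⟩))
  rw [Submodule.Quotient.mk_add] at h
  exact h

lemma qq_rel (a b c : Fin n) :
    (X a - 1) • qq b c + (X b - 1) • qq c a + (X c - 1) • qq a b = 0 := by
  have h : (Submodule.Quotient.mk ((X a - 1) • gamma b c + (X b - 1) • gamma c a
      + (X c - 1) • gamma a b) : AlexModule n) = 0 :=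
    (Submodule.Quotient.mk_eq_zero _).mpr
      (Submodule.subset_span (Or.inr ⟨a, b, c, rfl⟩))
  rw [Submodule.Quotient.mk_add, Submodule.Quotient.mk_add, Submodule.Quotient.mk_smul,
    Submodule.Quotient.mk_smul, Submodule.Quotient.mk_smul] at h
  exact h

lemma qq_key (a b c : Fin n) :
    (X c - 1) • qq a b = (X b - 1) • qq a c - (X a - 1) • qq b c := by
  have h1 := qq_rel a b c
  have h2 : qq c a = - qq a c := eq_neg_of_add_eq_zero_left (qq_skew c a)
  rw [h2, smul_neg] at h1
  rw [← sub_eq_zero, ← h1]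
  abel

/-- The target vectors `(x_a-1)(x_b-1)(e_a - e_b)` in `Kⁿ`. -/
def wv (n : ℕ) (p : Fin n × Fin n) : Fin n → Kn n :=
  algebraMap (LaurentRing n) (Kn n) ((X p.1 - 1) * (X p.2 - 1)) •
    (Pi.single p.1 1 - Pi.single p.2 1)

def psi0 (n : ℕ) : (Fin n × Fin n → LaurentRing n) →ₗ[LaurentRing n] (Fin n → Kn n) :=
  Fintype.linearCombination (LaurentRing n) (wv n)

lemma psi0_gamma (a b : Fin n) : psi0 n (gamma a b) = wv n (a, b) := by
  rw [psi0, gamma, Fintype.linearCombination_apply_single, one_smul]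

lemma relations_subset_ker :
    AlexRelations n ⊆ ↑(LinearMap.ker (psi0 n)) := by
  rintro v (⟨a, b, rfl⟩ | ⟨a, b, c, rfl⟩) <;>
    simp only [SetLike.mem_coe, LinearMap.mem_ker, map_add, map_smul, psi0_gamma]
  · rw [wv, wv]
    rw [show (X b - 1) * (X a - 1) = (X a - 1) * (X b - 1) from mul_comm _ _,
      smul_sub, smul_sub]
    abel
  · rw [wv, wv, wv]
    rw [← algebraMap_smul (Kn n) (X a - 1), ← algebraMap_smul (Kn n) (X b - 1),
      ← algebraMap_smul (Kn n) (X c - 1), smul_smul, smul_smul, smul_smul,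
      ← map_mul, ← map_mul, ← map_mul]
    rw [show (X b - 1) * ((X c - 1) * (X a - 1)) = (X a - 1) * ((X b - 1) * (X c - 1)) by ring,
      show (X c - 1) * ((X a - 1) * (X b - 1)) = (X a - 1) * ((X b - 1) * (X c - 1)) by ring,
      smul_sub, smul_sub, smul_sub]
    abel

def psi1 (n : ℕ) : AlexModule n →ₗ[LaurentRing n] (Fin n → Kn n) :=
  Submodule.liftQ _ (psi0 n) (Submodule.span_le.mpr relations_subset_ker)

lemma psi1_qq (a b : Fin n) : psi1 n (qq a b) = wv n (a, b) :=
  psi0_gamma a b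

lemma end_isUnit (n : ℕ) (s : nonZeroDivisors (LaurentRing n)) :
    IsUnit ((algebraMap (LaurentRing n) (Module.End (LaurentRing n) (Fin n → Kn n)))
      (s : LaurentRing n)) := by
  rw [Module.End.isUnit_iff]
  have hu : IsUnit (algebraMap (LaurentRing n) (Kn n) (s : LaurentRing n)) :=
    IsLocalization.map_units _ s
  have hend : ∀ z : Fin n → Kn n,
      (algebraMap (LaurentRing n) (Module.End (LaurentRing n) (Fin n → Kn n))
        (s : LaurentRing n)) z
        = algebraMap (LaurentRing n) (Kn n) (s : LaurentRing n) • z := by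
    intro z
    rw [Module.algebraMap_end_apply, algebraMap_smul]
  constructor
  · intro x y hxy
    rw [hend, hend] at hxy
    exact smul_right_injective _ hu.ne_zero hxy
  · intro y
    refine ⟨((hu.unit⁻¹ : (Kn n)ˣ) : Kn n) • y, ?_⟩
    rw [hend, smul_smul, hu.mul_val_inv, one_smul]

def Phi (n : ℕ) :
    LocalizedModule (nonZeroDivisors (LaurentRing n)) (AlexModule n) →ₗ[Kn n] (Fin n → Kn n) :=
  LinearMap.extendScalarsOfIsLocalization (nonZeroDivisors (LaurentRing n)) (Kn n)
    (LocalizedModule.lift _ (psi1 n) (end_isUnit n))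

lemma Phi_mk (m : AlexModule n) : Phi n (LocalizedModule.mk m 1) = psi1 n m := by
  rw [Phi, LinearMap.extendScalarsOfIsLocalization_apply', ← LocalizedModule.mkLinearMap_apply,
    ← LinearMap.comp_apply, LocalizedModule.lift_comp]

lemma mem_of_smul_mem {M : Type} [AddCommGroup M] [Module (LaurentRing n) M] [Module (Kn n) M]
    [IsScalarTower (LaurentRing n) (Kn n) M] (P : Submodule (Kn n) M)
    (r : LaurentRing n) (hr : r ≠ 0) (x : M) (h : r • x ∈ P) : x ∈ P := by
  have hu : IsUnit (algebraMap (LaurentRing n) (Kn n) r) :=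
    IsLocalization.map_units _ (⟨r, mem_nonZeroDivisors_of_ne_zero hr⟩ : nonZeroDivisors _)
  have hx : ((hu.unit⁻¹ : (Kn n)ˣ) : Kn n) • (r • x) = x := by
    rw [← algebraMap_smul (Kn n) r x, smul_smul, hu.val_inv_mul, one_smul]
  rw [← hx]
  exact P.smul_mem _ h

end AlexProof

/-- the module `M` on generators `γ_{ab}` with relations
`γ_{ab} + γ_{ba} = 0` and `(x_a − 1)γ_{bc} + (x_b − 1)γ_{ca} + (x_c − 1)γ_{ab} = 0`
has rank `n − 1` over `R = ℤ[x₁^{±1}, …, x_n^{±1}]`, i.e.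
`dim_{Frac(R)} (M ⊗_R Frac(R)) = n − 1`. -/
theorem alexModule_rank (n : ℕ) :
    Module.rank (FractionRing (LaurentRing n))
      (LocalizedModule (nonZeroDivisors (LaurentRing n)) (AlexModule n)) = (n - 1 : ℕ) := by
  cases n with
  | zero =>
    haveI hbase : Subsingleton (Fin 0 × Fin 0 → LaurentRing 0) :=
      ⟨fun f g => funext fun p => p.1.elim0⟩
    haveI : Subsingleton (AlexModule 0) := by
      constructor
      intro x y
      obtain ⟨f, rfl⟩ := Submodule.Quotient.mk_surjective _ x
      obtain ⟨g, rfl⟩ := Submodule.Quotient.mk_surjective _ y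
      rw [Subsingleton.elim f g]
    haveI : Subsingleton
        (LocalizedModule (nonZeroDivisors (LaurentRing 0)) (AlexModule 0)) := by
      refine subsingleton_of_forall_eq 0 fun z => ?_
      induction z using LocalizedModule.induction_on with
      | _ m s => rw [Subsingleton.elim m 0, LocalizedModule.zero_mk]
    rw [rank_subsingleton']
    norm_num
  | succ m =>
    let K := Kn (m + 1)
    let R := LaurentRing (m + 1)
    -- the family of generators
    let v : {a : Fin (m + 1) // a ≠ 0} →
        LocalizedModule (nonZeroDivisors R) (AlexModule (m + 1)) :=
      fun a => LocalizedModule.mk (qq a.1 0) 1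
    have hPhiv : ∀ a : {a : Fin (m + 1) // a ≠ 0}, Phi (m + 1) (v a) = wv (m + 1) (a.1, 0) :=
      fun a => (Phi_mk _).trans (psi1_qq _ _)
    have hinj := IsFractionRing.injective R K
    have hc : ∀ a b : Fin (m + 1), algebraMap R K ((X a - 1) * (X b - 1)) ≠ 0 := by
      intro a b
      rw [map_ne_zero_iff _ hinj]
      exact mul_ne_zero (X_sub_one_ne_zero a) (X_sub_one_ne_zero b)
    have hcard : Fintype.card {a : Fin (m + 1) // a ≠ 0} = m := by
      have := Fintype.card_subtype_compl (fun a : Fin (m + 1) => a = 0)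
      simp only [Fintype.card_subtype_eq, Fintype.card_fin] at this
      exact this
    -- lower bound
    have hLIw : LinearIndependent K (fun a : {a : Fin (m + 1) // a ≠ 0} =>
        wv (m + 1) (a.1, 0)) := by
      rw [Fintype.linearIndependent_iff]
      intro g hg b
      have hb := congrFun hg b.1
      simp only [wv, Finset.sum_apply, Pi.smul_apply, Pi.sub_apply, Pi.single_apply,
        smul_eq_mul, Pi.zero_apply, b.2, if_false, sub_zero, mul_ite, mul_one, mul_zero,
        Subtype.coe_inj] at hb
      rw [Finset.sum_ite_eq] at hb
      simp only [Finset.mem_univ, if_true] at hb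
      exact (mul_eq_zero.mp hb).resolve_right (hc b.1 0)
    have hLI : LinearIndependent K v := by
      apply LinearIndependent.of_comp (Phi (m + 1))
      have hcomp : ⇑(Phi (m + 1)) ∘ v = fun a : {a : Fin (m + 1) // a ≠ 0} =>
          wv (m + 1) (a.1, 0) := funext fun a => hPhiv a
      rw [hcomp]
      exact hLIw
    have hlow : (m : Cardinal) ≤ Module.rank K
        (LocalizedModule (nonZeroDivisors R) (AlexModule (m + 1))) := by
      have h := hLI.cardinal_le_rank
      rwa [Cardinal.mk_fintype, hcard] at h
    -- upper bound
    let P : Submodule K (LocalizedModule (nonZeroDivisors R) (AlexModule (m + 1))) :=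
      Submodule.span K (Set.range v)
    have hmem0 : ∀ a : Fin (m + 1), LocalizedModule.mk (qq a 0) 1 ∈ P := by
      intro a
      by_cases ha : a = 0
      · subst ha
        apply mem_of_smul_mem P (2 : R) two_ne_zero_laurent
        have hq : (2 : R) • qq (0 : Fin (m + 1)) 0 = 0 := by
          rw [two_smul]; exact qq_skew 0 0
        rw [LocalizedModule.smul'_mk, hq, LocalizedModule.zero_mk]
        exact P.zero_mem
      · exact Submodule.subset_span ⟨⟨a, ha⟩, rfl⟩
    have hmem : ∀ a b : Fin (m + 1), LocalizedModule.mk (qq a b) 1 ∈ P := by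
      intro a b
      apply mem_of_smul_mem P (X (0 : Fin (m + 1)) - 1) (X_sub_one_ne_zero 0)
      rw [LocalizedModule.smul'_mk, qq_key a b 0, ← LocalizedModule.mkLinearMap_apply,
        map_sub, map_smul, map_smul, LocalizedModule.mkLinearMap_apply,
        LocalizedModule.mkLinearMap_apply]
      refine Submodule.sub_mem _ ?_ ?_
      · exact (P.restrictScalars R).smul_mem _ (hmem0 a)
      · exact (P.restrictScalars R).smul_mem _ (hmem0 b)
    have htop : ∀ z : LocalizedModule (nonZeroDivisors R) (AlexModule (m + 1)), z ∈ P := by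
      intro z
      induction z using LocalizedModule.induction_on with
      | _ mm s =>
        apply mem_of_smul_mem P (s : R) (nonZeroDivisors.ne_zero s.2)
        rw [LocalizedModule.smul'_mk]
        rw [show ((s : R) • mm) = (s • mm) from rfl, LocalizedModule.mk_cancel]
        obtain ⟨f, rfl⟩ := Submodule.Quotient.mk_surjective _ mm
        have hf : f ∈ Submodule.span R
            (Set.range (Pi.basisFun R (Fin (m + 1) × Fin (m + 1)))) := by
          rw [Module.Basis.span_eq]; trivial
        induction hf using Submodule.span_induction with
        | mem x hx =>
          obtain ⟨p, rfl⟩ := hx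
          have hbp : (Pi.basisFun R (Fin (m + 1) × Fin (m + 1))) p = gamma p.1 p.2 := by
            rw [Pi.basisFun_apply, gamma]
          rw [hbp]
          exact hmem p.1 p.2
        | zero =>
          rw [show (Submodule.Quotient.mk 0 : AlexModule (m + 1)) = (0 : AlexModule (m + 1)) from Submodule.Quotient.mk_zero _,
            LocalizedModule.zero_mk]
          exact P.zero_mem
        | add x y hx hy ihx ihy =>
          rw [show (Submodule.Quotient.mk (x + y) : AlexModule (m + 1)) = (show AlexModule (m + 1) from Submodule.Quotient.mk x)
              + (show AlexModule (m + 1) from Submodule.Quotient.mk y) from Submodule.Quotient.mk_add _,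
            ← LocalizedModule.mkLinearMap_apply, map_add,
            LocalizedModule.mkLinearMap_apply, LocalizedModule.mkLinearMap_apply]
          exact P.add_mem ihx ihy
        | smul r x hx ihx =>
          rw [show (Submodule.Quotient.mk (r • x) : AlexModule (m + 1)) = r • (show AlexModule (m + 1) from Submodule.Quotient.mk x)
              from Submodule.Quotient.mk_smul _ _ _, ← LocalizedModule.smul'_mk]
          exact (P.restrictScalars R).smul_mem r ihx
    have hspan_top : P = ⊤ := eq_top_iff.mpr fun z _ => htop z
    have hup : Module.rank K
        (LocalizedModule (nonZeroDivisors R) (AlexModule (m + 1))) ≤ (m : Cardinal) := by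
      calc Module.rank K (LocalizedModule (nonZeroDivisors R) (AlexModule (m + 1)))
          = Module.rank K (⊤ : Submodule K
            (LocalizedModule (nonZeroDivisors R) (AlexModule (m + 1)))) := (rank_top K _).symm
        _ = Module.rank K P := by rw [hspan_top]
        _ ≤ Cardinal.mk (Set.range v) := rank_span_le _
        _ ≤ Cardinal.mk {a : Fin (m + 1) // a ≠ 0} := Cardinal.mk_range_le
        _ = (m : Cardinal) := by rw [Cardinal.mk_fintype, hcard]
    rw [Nat.add_sub_cancel]
    exact le_antisymm hup hlow
end

section
/- Let G = ⟨g₁, …, g_n⟩ be the free group on n generators and G' its commutator subgroup. Then the abelianization Ab(G') of G' is generated as a ℤ[ℤⁿ]-module (with ℤⁿ = Ab(G) acting by conjugation) by the images of the commutators [g_a, g_b] for 1 ≤ a < b ≤ n. -/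
open scoped commutatorElement

/-- let `G` be the free group on `n` generators and `G'` its commutator
subgroup. Then the abelianization of `G'` is generated, as a module over
`ℤ[ℤⁿ] = ℤ[Ab(G)]` with `Ab(G)` acting by conjugation, by the images of the commutators
`[g_a, g_b]`, `a < b`; equivalently, it is generated as an abelian group by the images of
all conjugates `g [g_a, g_b] g⁻¹`, `g ∈ G`, `a < b`. -/
theorem freeGroup_commutator_abelianization_generated (n : ℕ) :
    Subgroup.closure
      {x : Abelianization (commutator (FreeGroup (Fin n))) |
        ∃ (g : FreeGroup (Fin n)) (a b : Fin n), a < b ∧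
          x = Abelianization.of
            (⟨g * ⁅FreeGroup.of a, FreeGroup.of b⁆ * g⁻¹,
              Subgroup.Normal.conj_mem inferInstance _
                (Subgroup.commutator_mem_commutator (Subgroup.mem_top _)
                  (Subgroup.mem_top _)) g⟩ : commutator (FreeGroup (Fin n)))} = ⊤ := by
  classical
  set G := FreeGroup (Fin n)
  set H : Subgroup G := commutator G with hH
  -- the set of basic commutators
  set S0 : Set G := {y | ∃ a b : Fin n, a < b ∧ y = ⁅FreeGroup.of a, FreeGroup.of b⁆} with hS0
  -- step 1: commutator G = normalClosure S0
  have hNle : Subgroup.normalClosure S0 ≤ H := by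
    apply Subgroup.normalClosure_le_normal
    rintro y ⟨a, b, _, rfl⟩
    exact Subgroup.commutator_mem_commutator (Subgroup.mem_top _) (Subgroup.mem_top _)
  have hleN : H ≤ Subgroup.normalClosure S0 := by
    rw [hH, commutator_def, Subgroup.commutator_le]
    intro x _ y _
    apply (QuotientGroup.eq_one_iff _).mp
    show (QuotientGroup.mk' (Subgroup.normalClosure S0)) ⁅x, y⁆ = 1
    rw [map_commutatorElement, commutatorElement_eq_one_iff_commute]
    have key : ∀ a b : Fin n, Commute ((QuotientGroup.mk' (Subgroup.normalClosure S0)) (FreeGroup.of a))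
        ((QuotientGroup.mk' (Subgroup.normalClosure S0)) (FreeGroup.of b)) := by
      intro a b
      rcases lt_trichotomy a b with h | h | h
      · rw [← commutatorElement_eq_one_iff_commute, ← map_commutatorElement]
        exact (QuotientGroup.eq_one_iff _).mpr (Subgroup.subset_normalClosure ⟨a, b, h, rfl⟩)
      · rw [h]
      · symm
        rw [← commutatorElement_eq_one_iff_commute, ← map_commutatorElement]
        exact (QuotientGroup.eq_one_iff _).mpr (Subgroup.subset_normalClosure ⟨b, a, h, rfl⟩)
    have hx : x ∈ Subgroup.closure (Set.range (FreeGroup.of : Fin n → G)) := by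
      rw [FreeGroup.closure_range_of]; trivial
    have hy : y ∈ Subgroup.closure (Set.range (FreeGroup.of : Fin n → G)) := by
      rw [FreeGroup.closure_range_of]; trivial
    induction hx using Subgroup.closure_induction with
    | mem u hu =>
      obtain ⟨a, rfl⟩ := hu
      induction hy using Subgroup.closure_induction with
      | mem v hv => obtain ⟨b, rfl⟩ := hv; exact key a b
      | one => simp [Commute.one_right]
      | mul v w _ _ h1 h2 => simpa using ((h1 trivial).mul_right (h2 trivial) : Commute _ _)
      | inv v _ h1 => simpa using (h1 trivial).inv_right
    | one => simp [Commute.one_left]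
    | mul u w _ _ h1 h2 => simpa using ((h1 trivial).mul_left (h2 trivial) : Commute _ _)
    | inv u _ h1 => simpa using (h1 trivial).inv_left
  -- the conjugates set in G
  set S : Set G := {y | ∃ (g : G) (a b : Fin n), a < b ∧ y = g * ⁅FreeGroup.of a, FreeGroup.of b⁆ * g⁻¹} with hS
  have hconj : Group.conjugatesOfSet S0 = S := by
    ext y
    constructor
    · intro hy
      rw [Group.mem_conjugatesOfSet_iff] at hy
      obtain ⟨z, ⟨a, b, hab, rfl⟩, hc⟩ := hy
      rw [isConj_iff] at hc
      obtain ⟨c, hc⟩ := hc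
      exact ⟨c, a, b, hab, hc.symm⟩
    · rintro ⟨g, a, b, hab, rfl⟩
      rw [Group.mem_conjugatesOfSet_iff]
      exact ⟨⁅FreeGroup.of a, FreeGroup.of b⁆, ⟨a, b, hab, rfl⟩, isConj_iff.mpr ⟨g, rfl⟩⟩
  have hclosS : Subgroup.closure S = H := by
    rw [← hconj]
    exact le_antisymm hNle hleN
  -- step 2: transfer to the subtype
  set S' : Set H := {y | ∃ (g : G) (a b : Fin n), a < b ∧
      (y : G) = g * ⁅FreeGroup.of a, FreeGroup.of b⁆ * g⁻¹} with hS'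
  have himg : H.subtype '' S' = S := by
    ext y
    constructor
    · rintro ⟨⟨z, hz⟩, ⟨g, a, b, hab, h⟩, rfl⟩
      exact ⟨g, a, b, hab, h⟩
    · rintro ⟨g, a, b, hab, rfl⟩
      refine ⟨⟨_, ?_⟩, ⟨g, a, b, hab, rfl⟩, rfl⟩
      rw [← hclosS]
      exact Subgroup.subset_closure ⟨g, a, b, hab, rfl⟩
  have hS'top : Subgroup.closure S' = ⊤ := by
    apply Subgroup.map_injective (H.subtype_injective)
    rw [MonoidHom.map_closure, himg, hclosS, ← MonoidHom.range_eq_map, Subgroup.range_subtype]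
  -- step 3: pass to the abelianization
  have hsurj : Function.Surjective ⇑(Abelianization.of : H →* Abelianization H) := fun y =>
    Quotient.inductionOn y fun z => ⟨z, rfl⟩
  have himg2 : ⇑(Abelianization.of : H →* Abelianization H) '' S' =
      {x : Abelianization H |
        ∃ (g : G) (a b : Fin n), a < b ∧
          x = Abelianization.of
            (⟨g * ⁅FreeGroup.of a, FreeGroup.of b⁆ * g⁻¹,
              Subgroup.Normal.conj_mem inferInstance _
                (Subgroup.commutator_mem_commutator (Subgroup.mem_top _)
                  (Subgroup.mem_top _)) g⟩ : commutator (FreeGroup (Fin n)))} := by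
    ext x
    constructor
    · rintro ⟨⟨z, hz⟩, ⟨g, a, b, hab, h⟩, rfl⟩
      refine ⟨g, a, b, hab, ?_⟩
      congr 1
      exact Subtype.ext h
    · rintro ⟨g, a, b, hab, rfl⟩
      exact ⟨_, ⟨g, a, b, hab, rfl⟩, rfl⟩
  rw [← himg2, ← MonoidHom.map_closure, hS'top, ← MonoidHom.range_eq_map,
    MonoidHom.range_eq_top.mpr hsurj]
end

section
/- Let G be a finitely generated group with finite presentation and TFM(G) its torsion free metabelianization. For a nontrivial character ρ: Ab(G) → ℂ*, H¹(G, ℂ_ρ) ≠ 0 if and only if ℂ_ρ, viewed as a module over ℤ[Ab(G)], satisfies Hom_{ℤ[Ab(G)]}(Alex(G), ℂ_ρ) ≠ 0, where Alex(G) is the commutator subgroup of TFM(G) with its natural ℤ[Ab(G)]-module structure from conjugation. -/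
section CocycleAux

variable {G : Type*} [Group G] {ρ : G →* ℂˣ} {τ : G → ℂ}

theorem Z1_one (hτ : τ ∈ Z1 ρ) : τ 1 = 0 := by
  have h := hτ 1 1
  simp only [one_mul, map_one, Units.val_one] at h
  linear_combination -h

theorem Z1_mul_of_one (hτ : τ ∈ Z1 ρ) {a : G} (ha : (ρ a : ℂ) = 1) (b : G) :
    τ (a * b) = τ a + τ b := by
  have h := hτ a b; rw [ha, one_mul] at h; linear_combination h

theorem Z1_inv_eq (hτ : τ ∈ Z1 ρ) (s : G) : (ρ s : ℂ) * τ s⁻¹ + τ s = 0 := by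
  have h := hτ s s⁻¹
  rw [mul_inv_cancel, Z1_one hτ] at h
  linear_combination -h

theorem Z1_conj (hτ : τ ∈ Z1 ρ) (s : G) {a : G} (ha : (ρ a : ℂ) = 1) :
    τ (s * a * s⁻¹) = (ρ s : ℂ) * τ a := by
  have h1 := hτ s (a * s⁻¹)
  have h2 := hτ a s⁻¹
  have h3 := Z1_inv_eq hτ s
  rw [ha, one_mul] at h2
  rw [mul_assoc, h1, h2]
  linear_combination h3

end CocycleAux

open scoped commutatorElement


/-- let `G` be a finitely generated (finitely presented) group, `K` its
torsion free metabelian kernel, `TFM(G) = G/K`, and `Alex(G) = [TFM(G), TFM(G)]` the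
Alexander module, with `Ab(G)` acting by conjugation. For a nontrivial character
`ρ : Ab(G) → ℂ*`, one has `H¹(G, ℂ_ρ) ≠ 0` if and only if there is a nonzero
`ℤ[Ab(G)]`-module map `Alex(G) → ℂ_ρ`, i.e. a nonzero additive homomorphism
`τ : Alex(G) → ℂ` with `τ(s a s⁻¹) = ρ(s) τ(a)`. -/
theorem h1_nontrivial_iff_alexander_hom (G : Type*) [Group G] [Group.FG G]
    (K : Subgroup G) [K.Normal]
    (hK : (K : Set G) = {g : G | ∃ h : g ∈ commutator G,
      IsOfFinOrder (Abelianization.of (⟨g, h⟩ : commutator G))})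
    (ρ : Abelianization G →* ℂˣ) (hρ : ρ ≠ 1) :
    Nontrivial (H1 (ρ.comp Abelianization.of)) ↔
      ∃ τ : commutator (G ⧸ K) → ℂ,
        (∀ a b : commutator (G ⧸ K), τ (a * b) = τ a + τ b) ∧
        (∀ (s : G) (a : commutator (G ⧸ K)),
          τ ⟨(s : G ⧸ K) * (a : G ⧸ K) * (s : G ⧸ K)⁻¹,
              Subgroup.Normal.conj_mem inferInstance _ a.2 _⟩
            = (ρ (Abelianization.of s) : ℂ) * τ a) ∧
        τ ≠ 0 := by
  classical
  set ρ' : G →* ℂˣ := ρ.comp Abelianization.of with hρ'def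
  set π : G →* G ⧸ K := QuotientGroup.mk' K with hπdef
  have hπs : Function.Surjective π := QuotientGroup.mk'_surjective K
  have hmap : Subgroup.map π (commutator G) = commutator (G ⧸ K) := by
    rw [commutator_def, commutator_def, Subgroup.map_commutator,
      Subgroup.map_top_of_surjective _ hπs]
  have hof1 : ∀ {g : G}, g ∈ commutator G → Abelianization.of g = 1 := fun {g} h =>
    (QuotientGroup.eq_one_iff g).mpr h
  have hρ1 : ∀ {g : G}, g ∈ commutator G → ((ρ' g : ℂ)) = 1 := by
    intro g h
    rw [hρ'def, MonoidHom.comp_apply, hof1 h, map_one, Units.val_one]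
  have hKmem : ∀ g : G, g ∈ K ↔ ∃ h : g ∈ commutator G,
      IsOfFinOrder (Abelianization.of (⟨g, h⟩ : commutator G)) := by
    intro g
    constructor
    · intro hg
      have : g ∈ (K : Set G) := hg
      rw [hK] at this; exact this
    · intro hg
      have : g ∈ (K : Set G) := by rw [hK]; exact hg
      exact this
  -- any cocycle vanishes on K
  have hTK : ∀ T : G → ℂ, T ∈ Z1 ρ' → ∀ g ∈ K, T g = 0 := by
    intro T hT g hg
    obtain ⟨hgc, hfin⟩ := (hKmem g).mp hg
    set ψ : (commutator G) →* Multiplicative ℂ :=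
      { toFun := fun x => Multiplicative.ofAdd (T x.val)
        map_one' := by
          simpa using Z1_one hT
        map_mul' := by
          intro x y
          have h := Z1_mul_of_one hT (hρ1 x.2) y.val
          simp only [Subgroup.coe_mul] at *
          rw [h]
          rfl } with hψdef
    have hker : commutator (commutator G) ≤ ψ.ker := Abelianization.commutator_subset_ker ψ
    obtain ⟨n, hn, hpow⟩ := isOfFinOrder_iff_pow_eq_one.mp hfin
    have hmemn : (⟨g, hgc⟩ : commutator G) ^ n ∈ commutator (commutator G) := by
      rw [← QuotientGroup.eq_one_iff]
      rw [← map_pow] at hpow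
      exact hpow
    have hψ1 : ψ ((⟨g, hgc⟩ : commutator G) ^ n) = 1 := hker hmemn
    rw [map_pow] at hψ1
    have : Multiplicative.ofAdd (n • T g) = 1 := by
      rw [ofAdd_nsmul]; exact hψ1
    have hz : n • T g = 0 := by
      simpa using this
    have : (n : ℂ) * T g = 0 := by
      rw [← nsmul_eq_mul]; exact hz
    rcases mul_eq_zero.mp this with h | h
    · exact absurd (Nat.cast_eq_zero.mp h) hn.ne'
    · exact h
  have hofsurj : ∀ q : Abelianization G, ∃ g : G, Abelianization.of g = q := by
    intro q; exact Quot.exists_rep q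
  -- nontrivial value of ρ'
  have hexth : ∃ t : G, ((ρ' t : ℂ)) ≠ 1 := by
    by_contra h
    push_neg at h
    apply hρ
    refine MonoidHom.ext fun q => ?_
    obtain ⟨g, rfl⟩ := hofsurj q
    have h2 := h g
    rw [hρ'def, MonoidHom.comp_apply] at h2
    rw [MonoidHom.one_apply]
    exact Units.ext (by rw [Units.val_one]; exact h2)
  have hmem' : ∀ {g : G}, g ∈ commutator G → π g ∈ commutator (G ⧸ K) := by
    intro g hg
    exact (SetLike.ext_iff.mp hmap (π g)).mp (Subgroup.mem_map_of_mem π hg)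
  constructor
  · -- forward direction
    intro hH1
    unfold H1 at hH1
    obtain ⟨x, y, hxy⟩ := hH1
    obtain ⟨Tz, hTz⟩ := QuotientAddGroup.mk_surjective (x - y)
    have hTzne : (QuotientAddGroup.mk Tz : _ ⧸ (B1 ρ').addSubgroupOf (Z1 ρ')) ≠ 0 := by
      rw [hTz]; exact sub_ne_zero_of_ne hxy
    have hTB : (Tz : G → ℂ) ∉ B1 ρ' := by
      intro h
      exact hTzne ((QuotientAddGroup.eq_zero_iff Tz).mpr
        (AddSubgroup.mem_addSubgroupOf.mpr h))
    set T : G → ℂ := (Tz : G → ℂ) with hTdef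
    have hTZ : T ∈ Z1 ρ' := Tz.2
    have hxmem : ∀ x : commutator (G ⧸ K), ∃ g, g ∈ commutator G ∧ π g = (x : G ⧸ K) := by
      intro x
      obtain ⟨g, hg, hgv⟩ := Subgroup.mem_map.mp ((SetLike.ext_iff.mp hmap ((x : G ⧸ K))).mpr x.2)
      exact ⟨g, hg, hgv⟩
    have hTind : ∀ g g' : G, g ∈ commutator G → π g = π g' → T g = T g' := by
      intro g g' hg he
      have hk : g⁻¹ * g' ∈ K := by
        rw [hπdef, QuotientGroup.mk'_apply, QuotientGroup.mk'_apply] at he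
        exact QuotientGroup.eq.mp he
      have : T (g * (g⁻¹ * g')) = T g + T (g⁻¹ * g') := Z1_mul_of_one hTZ (hρ1 hg) _
      rw [mul_inv_cancel_left] at this
      rw [this, hTK T hTZ _ hk, add_zero]
    set τ : commutator (G ⧸ K) → ℂ := fun x => T (hxmem x).choose with hτdef
    have hτval : ∀ (g : G) (x : commutator (G ⧸ K)), g ∈ commutator G →
        π g = (x : G ⧸ K) → τ x = T g := by
      intro g x hg hgx
      have hc := (hxmem x).choose_spec
      exact (hTind _ g hc.1 (by rw [hc.2, hgx]))
    refine ⟨τ, ?_, ?_, ?_⟩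
    · intro a b
      obtain ⟨ga, hga, hπa⟩ := hxmem a
      obtain ⟨gb, hgb, hπb⟩ := hxmem b
      rw [hτval ga a hga hπa, hτval gb b hgb hπb,
        hτval (ga * gb) (a * b) (mul_mem hga hgb) (by rw [map_mul, hπa, hπb]; rfl)]
      exact Z1_mul_of_one hTZ (hρ1 hga) gb
    · intro s a
      obtain ⟨ga, hga, hπa⟩ := hxmem a
      have hmem : s * ga * s⁻¹ ∈ commutator G :=
        Subgroup.Normal.conj_mem inferInstance ga hga s
      rw [hτval ga a hga hπa,
        hτval (s * ga * s⁻¹) _ hmem (by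
          simp only [map_mul, map_inv, hπa, hπdef, QuotientGroup.mk'_apply]
          rw [← hπa, hπdef, QuotientGroup.mk'_apply])]
      exact Z1_conj hTZ s (hρ1 hga)
    · intro hτ0
      apply hTB
      have hTcomm0 : ∀ g ∈ commutator G, T g = 0 := by
        intro g hg
        have := hτval g ⟨π g, hmem' hg⟩ hg rfl
        rw [← this, hτ0]
        rfl
      have hTab : ∀ a b : G, T (a * b) = T (b * a) := by
        intro a b
        have hcm : ⁅a, b⁆ ∈ commutator G := by
          rw [commutator_def]
          exact Subgroup.commutator_mem_commutator (Subgroup.mem_top a) (Subgroup.mem_top b)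
        have h1 : T (⁅a, b⁆ * (b * a)) = T ⁅a, b⁆ + T (b * a) :=
          Z1_mul_of_one hTZ (hρ1 hcm) _
        rw [show ⁅a, b⁆ * (b * a) = a * b by group] at h1
        rw [h1, hTcomm0 _ hcm, zero_add]
      have hrel : ∀ a b : G, ((ρ' a : ℂ) - 1) * T b = ((ρ' b : ℂ) - 1) * T a := by
        intro a b
        have h1 := hTZ a b
        have h2 := hTZ b a
        rw [hTab a b] at h1
        rw [h1] at h2
        linear_combination h2
      obtain ⟨t, ht⟩ := hexth
      have htne : ((ρ' t : ℂ)) - 1 ≠ 0 := sub_ne_zero_of_ne ht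
      refine ⟨T t / ((ρ' t : ℂ) - 1), ?_⟩
      intro a
      rw [← mul_div_assoc, div_sub_div_same, eq_div_iff htne]
      linear_combination -(hrel a t)
  · -- backward direction
    rintro ⟨τ, hadd, hconj, hne⟩
    have hcomm_of : ∀ g : G, Abelianization.of g = 1 → g ∈ commutator G := fun g h =>
      (QuotientGroup.eq_one_iff g).mp h
    set f : G → ℂ := fun g =>
      if hg : g ∈ commutator G then τ ⟨π g, hmem' hg⟩ else 0
      with hfdef
    have hfval : ∀ (g : G) (hg : g ∈ commutator G) (x : commutator (G ⧸ K)),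
        (x : G ⧸ K) = π g → f g = τ x := by
      intro g hg x hx
      simp only [hfdef, dif_pos hg]
      congr 1
      exact Subtype.ext hx.symm
    have hfmul : ∀ g h : G, g ∈ commutator G → h ∈ commutator G → f (g * h) = f g + f h := by
      intro g h hg hh
      rw [hfval g hg ⟨π g, hmem' hg⟩ rfl,
        hfval h hh ⟨π h, hmem' hh⟩ rfl,
        hfval (g * h) (mul_mem hg hh) ⟨π (g * h), hmem' (mul_mem hg hh)⟩ rfl, ← hadd]
      congr 1
    have hfone : f 1 = 0 := by
      have := hfmul 1 1 (one_mem _) (one_mem _)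
      rw [mul_one] at this
      linear_combination -this
    have hfconj : ∀ (s g : G), g ∈ commutator G →
        f (s * g * s⁻¹) = (ρ (Abelianization.of s) : ℂ) * f g := by
      intro s g hg
      have hmem : s * g * s⁻¹ ∈ commutator G :=
        Subgroup.Normal.conj_mem inferInstance g hg s
      have hx := hconj s ⟨π g, hmem' hg⟩
      rw [hfval (s * g * s⁻¹) hmem ⟨(s : G ⧸ K) * (π g) * (s : G ⧸ K)⁻¹, _⟩ (by
          simp only [map_mul, map_inv, hπdef, QuotientGroup.mk'_apply]),
        hfval g hg ⟨π g, hmem' hg⟩ rfl]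
      exact hx
    have hfconj' : ∀ (s g : G), g ∈ commutator G →
        f (s⁻¹ * g * s) = ((ρ (Abelianization.of s) : ℂ))⁻¹ * f g := by
      intro s g hg
      have h := hfconj s⁻¹ g hg
      rw [inv_inv] at h
      rw [h, map_inv, map_inv, Units.val_inv_eq_inv_val]
    obtain ⟨g0, hg0c, hg0⟩ : ∃ g, g ∈ commutator G ∧ f g ≠ 0 := by
      have : ∃ x, τ x ≠ 0 := by
        by_contra h
        push_neg at h
        exact hne (funext h)
      obtain ⟨x, hx⟩ := this
      obtain ⟨g, hg, hπg⟩ := Subgroup.mem_map.mp ((SetLike.ext_iff.mp hmap ((x : G ⧸ K))).mpr x.2)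
      exact ⟨g, hg, by rw [hfval g hg x hπg.symm]; exact hx⟩
    -- section of the abelianization
    choose σ hσ using hofsurj
    set d : Abelianization G → Abelianization G → G :=
      fun q r => (σ (q * r))⁻¹ * (σ q * σ r) with hddef
    have hd : ∀ q r, d q r ∈ commutator G := by
      intro q r
      apply hcomm_of
      simp only [hddef, map_mul, map_inv, hσ]
      group
    set φ : Abelianization G → Abelianization G → ℂ :=
      fun q r => (ρ (q * r) : ℂ) * f (d q r) with hφdef
    have hu : ∀ a b : Abelianization G, ((ρ (a * b) : ℂ)) = (ρ a : ℂ) * (ρ b : ℂ) := by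
      intro a b; rw [map_mul, Units.val_mul]
    -- 2-cocycle identity for φ
    have key : ∀ q r s : Abelianization G,
        (ρ q : ℂ) * φ r s + φ q (r * s) = φ (q * r) s + φ q r := by
      intro q r s
      have m1 := hd q (r * s)
      have m2 := hd r s
      have m3 := hd (q * r) s
      have m4 : (σ s)⁻¹ * d q r * σ s ∈ commutator G := by
        have := Subgroup.Normal.conj_mem (H := commutator G) inferInstance _ (hd q r) (σ s)⁻¹
        rwa [inv_inv] at this
      have hA : f (d q (r * s)) + f (d r s)
          = f (d (q * r) s) + f ((σ s)⁻¹ * d q r * σ s) := by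
        rw [← hfmul _ _ m1 m2, ← hfmul _ _ m3 m4]
        congr 1
        simp only [hddef]
        rw [← mul_assoc q r s]
        group
      have hc0 := hfconj' (σ s) (d q r) (hd q r)
      rw [hσ] at hc0
      have hs0 : (ρ s : ℂ) ≠ 0 := Units.ne_zero _
      have hc' : (ρ s : ℂ) * f ((σ s)⁻¹ * d q r * σ s) = f (d q r) := by
        rw [hc0]; field_simp
      simp only [hφdef, hu]
      linear_combination ((ρ q : ℂ) * (ρ r : ℂ) * (ρ s : ℂ)) * hA
        + ((ρ q : ℂ) * (ρ r : ℂ)) * hc'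
    obtain ⟨t, ht⟩ := hexth
    set q0 : Abelianization G := Abelianization.of t with hq0def
    have hq0 : ((ρ q0 : ℂ)) ≠ 1 := ht
    set u : Abelianization G → ℂ := fun q => φ q q0 - φ q0 q with hudef
    have hdu : ∀ q r, (ρ q : ℂ) * u r - u (q * r) + u q = (1 - (ρ q0 : ℂ)) * φ q r := by
      intro q r
      have h1 := key q r q0
      have h2 := key q q0 r
      have h3 := key q0 q r
      rw [mul_comm r q0] at h1
      rw [mul_comm q q0] at h2
      simp only [hudef]
      linear_combination h1 - h2 + h3
    have h10 : (1 : ℂ) - (ρ q0 : ℂ) ≠ 0 := sub_ne_zero_of_ne (Ne.symm hq0)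
    have hDD : ((1 : ℂ) - (ρ q0 : ℂ)) * ((1 : ℂ) - (ρ q0 : ℂ))⁻¹ = 1 := mul_inv_cancel₀ h10
    set c : Abelianization G → ℂ := fun q => u q * ((1 : ℂ) - (ρ q0 : ℂ))⁻¹ with hcdef
    have hc : ∀ q r, c (q * r) + φ q r = (ρ q : ℂ) * c r + c q := by
      intro q r
      simp only [hcdef]
      linear_combination (-((1 : ℂ) - (ρ q0 : ℂ))⁻¹) * hdu q r - (φ q r) * hDD
    -- the cocycle
    set T : G → ℂ := fun g =>
      c (Abelianization.of g)
        + (ρ (Abelianization.of g) : ℂ) * f ((σ (Abelianization.of g))⁻¹ * g) with hTdef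
    have hamem : ∀ g : G, (σ (Abelianization.of g))⁻¹ * g ∈ commutator G := by
      intro g
      apply hcomm_of
      simp only [map_mul, map_inv, hσ]
      group
    have hTZ : T ∈ Z1 ρ' := by
      intro g h
      set q := Abelianization.of g with hq
      set r := Abelianization.of h with hr
      have hmulab : Abelianization.of (g * h) = q * r := map_mul _ g h
      set a : G := (σ q)⁻¹ * g with hadef
      set b : G := (σ r)⁻¹ * h with hbdef
      have hac : a ∈ commutator G := hamem g
      have hbc : b ∈ commutator G := hamem h
      set x : G := (σ r)⁻¹ * a * σ r with hxdef
      have hxc : x ∈ commutator G := by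
        have := Subgroup.Normal.conj_mem (H := commutator G) inferInstance _ hac (σ r)⁻¹
        rwa [inv_inv] at this
      have hfa : f a = (ρ r : ℂ) * f x := by
        have := hfconj (σ r) x hxc
        rw [hσ] at this
        rw [show σ r * x * (σ r)⁻¹ = a by rw [hxdef]; group] at this
        exact this
      have he : (σ (q * r))⁻¹ * (g * h) = d q r * (x * b) := by
        simp only [hddef, hxdef, hadef, hbdef]
        group
      have hfgh : f ((σ (q * r))⁻¹ * (g * h)) = f (d q r) + (f x + f b) := by
        rw [he, hfmul _ _ (hd q r) (mul_mem hxc hbc), hfmul _ _ hxc hbc]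
      have hTgh : T (g * h) = c (q * r) + (ρ (q * r) : ℂ) * (f (d q r) + (f x + f b)) := by
        simp only [hTdef, hmulab, hfgh]
      have hc1 := hc q r
      have hφqr : φ q r = (ρ (q * r) : ℂ) * f (d q r) := rfl
      rw [hTgh]
      show _ = (ρ' g : ℂ) * (c r + (ρ r : ℂ) * f b) + (c q + (ρ q : ℂ) * f a)
      have hρ'g : (ρ' g : ℂ) = (ρ q : ℂ) := rfl
      rw [hρ'g]
      linear_combination hc1 - hφqr - ((ρ q : ℂ)) * hfa + (f x + f b) * hu q r
    have hTB : T ∉ B1 ρ' := by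
      rintro ⟨cc, hcc⟩
      have hTcomm : ∀ g ∈ commutator G, T g = 0 := by
        intro g hg
        have := hcc g
        rw [hρ1 hg, one_mul, sub_self] at this
        exact this
      have h1m : (σ (1 : Abelianization G))⁻¹ ∈ commutator G :=
        inv_mem (hcomm_of _ (hσ 1))
      have e1 : c 1 + f ((σ (1 : Abelianization G))⁻¹) = 0 := by
        have := hTcomm 1 (one_mem _)
        simp only [hTdef, map_one, Units.val_one, one_mul, mul_one] at this
        exact this
      have e2 : c 1 + (f ((σ (1 : Abelianization G))⁻¹) + f g0) = 0 := by
        have := hTcomm g0 hg0c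
        simp only [hTdef, hof1 hg0c, map_one, Units.val_one, one_mul] at this
        rwa [hfmul _ _ h1m hg0c] at this
      apply hg0
      linear_combination e2 - e1
    unfold H1
    refine ⟨QuotientAddGroup.mk (⟨T, hTZ⟩ : Z1 ρ'), 0, ?_⟩
    intro h
    exact hTB (AddSubgroup.mem_addSubgroupOf.mp ((QuotientAddGroup.eq_zero_iff _).mp h))
end

section
/- Let R = ℤ[x₁^{±1}, …, x_n^{±1}] with n ≥ 2, and M the R-module on generators γ_{ab} (1 ≤ a,b ≤ n) with relations γ_{ab} + γ_{ba} = 0 and (x_a − 1)γ_{bc} + (x_b − 1)γ_{ca} + (x_c − 1)γ_{ab} = 0. Then the localization of M at every prime ideal of R is nonzero; i.e., Supp(M) = Spec(R). -/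
/-- for `n ≥ 2`, the module `M` on generators `γ_{ab}` with relations
`γ_{ab} + γ_{ba} = 0` and `(x_a − 1)γ_{bc} + (x_b − 1)γ_{ca} + (x_c − 1)γ_{ab} = 0` over
`R = ℤ[x₁^{±1}, …, x_n^{±1}]` has nonzero localization at every prime of `R`; i.e.
`Supp(M) = Spec(R)`. -/
theorem alexModule_support_eq_univ (n : ℕ) (hn : 2 ≤ n) :
    Module.support (LaurentRing n) (AlexModule n) = Set.univ := by
  set R := LaurentRing n
  set i0 : Fin n := ⟨0, by omega⟩
  set i1 : Fin n := ⟨1, by omega⟩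
  set t : Fin n → R := fun i => if i = i0 then 1 else 0 with ht
  set c : Fin n × Fin n → R := fun p => (X p.1 - 1) * t p.2 - (X p.2 - 1) * t p.1 with hc
  set ψ : (Fin n × Fin n → R) →ₗ[R] R := Fintype.linearCombination R c with hψ
  have hψγ : ∀ a b : Fin n, ψ (gamma a b) = c (a, b) := by
    intro a b
    simp [hψ, gamma, Fintype.linearCombination_apply_single]
  have hspan : Submodule.span R (AlexRelations n) ≤ LinearMap.ker ψ := by
    rw [Submodule.span_le]
    rintro v (⟨a, b, rfl⟩ | ⟨a, b, d, rfl⟩) <;>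
      simp only [SetLike.mem_coe, LinearMap.mem_ker, map_add, map_smul, hψγ, smul_eq_mul, hc]
    · ring
    · ring
  set φ : AlexModule n →ₗ[R] R := Submodule.liftQ _ ψ hspan with hφ
  set m : AlexModule n := Submodule.Quotient.mk (gamma i1 i0) with hm
  have hφm : φ m = X i1 - 1 := by
    have hne : i1 ≠ i0 := by simp [i0, i1, Fin.ext_iff]
    have h0 : φ m = ψ (gamma i1 i0) := rfl
    rw [h0, hψγ, hc]
    simp [ht, hne]
  have hX1 : X i1 - 1 ≠ 0 := by
    rw [sub_ne_zero]
    intro h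
    have h' : (AddMonoidAlgebra.single (Finsupp.single i1 1) 1 : LaurentRing n)
        = AddMonoidAlgebra.single 0 1 := h.trans AddMonoidAlgebra.one_def
    have h'' : (Finsupp.single i1 1 : Fin n →₀ ℤ) = 0 :=
      AddMonoidAlgebra.single_left_injective one_ne_zero h'
    exact one_ne_zero (Finsupp.single_eq_zero.mp h'')
  ext p
  simp only [Set.mem_univ, iff_true]
  rw [Module.mem_support_iff_exists_annihilator]
  refine ⟨m, fun r hr => ?_⟩
  have hrm : r • m = 0 := by
    rw [Submodule.mem_annihilator] at hr
    exact hr m (Submodule.mem_span_singleton_self m)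
  have : r * (X i1 - 1) = 0 := by
    have := congrArg φ hrm
    rwa [map_smul, hφm, map_zero, smul_eq_mul] at this
  rcases mul_eq_zero.mp this with h | h
  · rw [h]; exact Ideal.zero_mem _
  · exact absurd h hX1
end
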